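/- Let E_i^* denote the static transitive closure of E_i, i.e., (u, v) ∈ E_i^* if and only if there is a nonempty directed path from u to v all of whose edges lie in E_i. Then for all vertices u, v: there is a non-strict journey from u to v in the evolving graph (E_1, ..., E_k) if and only if there is a strict journey from u to v in the evolving graph (E_1^*, ..., E_k^*). Consequently, the strict transitive closure of (E_1^*, ..., E_k^*) equals the non-strict transitive closure of (E_1, ..., E_k). -/

import Mathlib

/-!
An evolving graph on a finite vertex set `V` is given by edge sets
`E i ⊆ V × V` for time steps `i ∈ {1, ..., k}`.  A strict (resp. non-strict)
journey from `u` to `v` is a directed walk with at least one edge, whose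
edges carry strictly increasing (resp. nondecreasing) time indices in
`{1, ..., k}`.  We encode a walk with `p + 1 ≥ 1` edges by its vertex
sequence `w : Fin (p + 2) → V`.
-/

variable {V : Type*}

/-- There is a strict journey from `u` to `v` in `(E 1, ..., E k)`. -/
def StrictJourney (E : ℕ → Finset (V × V)) (k : ℕ) (u v : V) : Prop :=
  ∃ (p : ℕ) (w : Fin (p + 2) → V) (t : Fin (p + 1) → ℕ),
    StrictMono t ∧ (∀ j, 1 ≤ t j ∧ t j ≤ k) ∧
    w 0 = u ∧ w (Fin.last (p + 1)) = v ∧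
    ∀ j : Fin (p + 1), (w j.castSucc, w j.succ) ∈ E (t j)

/-- There is a non-strict journey from `u` to `v` in `(E 1, ..., E k)`. -/
def NonStrictJourney (E : ℕ → Finset (V × V)) (k : ℕ) (u v : V) : Prop :=
  ∃ (p : ℕ) (w : Fin (p + 2) → V) (t : Fin (p + 1) → ℕ),
    Monotone t ∧ (∀ j, 1 ≤ t j ∧ t j ≤ k) ∧
    w 0 = u ∧ w (Fin.last (p + 1)) = v ∧
    ∀ j : Fin (p + 1), (w j.castSucc, w j.succ) ∈ E (t j)

/-- There is a nonempty directed path (in the classic static sense) from `u`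
to `v` all of whose edges lie in `Ei`. -/
def PathIn (Ei : Finset (V × V)) (u v : V) : Prop :=
  ∃ (p : ℕ) (w : Fin (p + 2) → V),
    w 0 = u ∧ w (Fin.last (p + 1)) = v ∧
    ∀ j : Fin (p + 1), (w j.castSucc, w j.succ) ∈ Ei

open Classical in
/-- The static transitive closure `E_i^*` of `E_i`: `(u, v) ∈ E_i^*` iff
there is a nonempty directed path from `u` to `v` inside `E_i`. -/
noncomputable def staticClosure [Fintype V] (E : ℕ → Finset (V × V)) (i : ℕ) :
    Finset (V × V) :=
  Finset.univ.filter (fun e => PathIn (E i) e.1 e.2)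

/-!
A non-strict journey splits into maximal runs of edges with equal time label `i`; each run is a
path in `E i`, hence one edge of `E_i^*`, and the runs carry strictly increasing labels.
Conversely, an edge of `E_i^*` at time `i` expands into a path in `E i` whose edges all carry
label `i`. Viewing journeys as `TransGen` chains of states `(vertex, time of the last edge)`,
the grouping is an induction along the chain: an edge with the same label as its predecessor is
absorbed into the last closure edge.
-/

namespace Relation

variable {α : Type*} {r : α → α → Prop} {a b : α}

theorem transGen_iff_exists_fin_chain :
    TransGen r a b ↔ ∃ (p : ℕ) (s : Fin (p + 2) → α), s 0 = a ∧ s (Fin.last (p + 1)) = b ∧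
      ∀ j : Fin (p + 1), r (s j.castSucc) (s j.succ) := by
  constructor
  · intro h
    induction h with
    | @single c hac => exact ⟨0, ![a, c], rfl, rfl, fun j => by fin_cases j; exact hac⟩
    | @tail b c _ hbc ih =>
      obtain ⟨p, s, hs0, hsl, hs⟩ := ih
      refine ⟨p + 1, Fin.snoc s c, by simpa using hs0, by simp, Fin.lastCases ?_ fun j => ?_⟩
      · simpa [hsl] using hbc
      · rw [Fin.succ_castSucc, Fin.snoc_castSucc, Fin.snoc_castSucc]
        exact hs j
  · rintro ⟨p, s, rfl, rfl, hs⟩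
    induction p with
    | zero => exact .single (hs 0)
    | succ p ih =>
      exact .tail (ih (s ∘ Fin.castSucc) fun j => by simpa using hs j.castSucc) (hs (Fin.last _))

end Relation

open Relation

theorem pathIn_iff_transGen {Ei : Finset (V × V)} {u v : V} :
    PathIn Ei u v ↔ TransGen (fun a b => (a, b) ∈ Ei) u v :=
  (transGen_iff_exists_fin_chain (r := fun a b => (a, b) ∈ Ei)).symm

theorem mem_staticClosure [Fintype V] {E : ℕ → Finset (V × V)} {i : ℕ} {u v : V} :
    (u, v) ∈ staticClosure E i ↔ TransGen (fun a b => (a, b) ∈ E i) u v := by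
  classical
  simp [staticClosure, pathIn_iff_transGen]

theorem mem_staticClosure_of_mem [Fintype V] {E : ℕ → Finset (V × V)} {i : ℕ} {u v : V}
    (h : (u, v) ∈ E i) : (u, v) ∈ staticClosure E i :=
  mem_staticClosure.mpr (.single h)

def Journey (R : ℕ → ℕ → Prop) (E : ℕ → Finset (V × V)) (k : ℕ) (u v : V) : Prop :=
  ∃ (p : ℕ) (w : Fin (p + 2) → V) (t : Fin (p + 1) → ℕ),
    (∀ i : Fin p, R (t i.castSucc) (t i.succ)) ∧ (∀ j, 1 ≤ t j ∧ t j ≤ k) ∧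
    w 0 = u ∧ w (Fin.last (p + 1)) = v ∧
    ∀ j : Fin (p + 1), (w j.castSucc, w j.succ) ∈ E (t j)

theorem nonStrictJourney_iff_journey {E : ℕ → Finset (V × V)} {k : ℕ} {u v : V} :
    NonStrictJourney E k u v ↔ Journey (· ≤ ·) E k u v := by
  simp only [NonStrictJourney, Journey, Fin.monotone_iff_le_succ]

theorem strictJourney_iff_journey {E : ℕ → Finset (V × V)} {k : ℕ} {u v : V} :
    StrictJourney E k u v ↔ Journey (· < ·) E k u v := by
  simp only [StrictJourney, Journey, Fin.strictMono_iff_lt_succ]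

/-- Time `0` marks the start state `(u, 0)` of a journey. -/
def timedStep (R : ℕ → ℕ → Prop) (E : ℕ → Finset (V × V)) (k : ℕ) (x y : V × ℕ) : Prop :=
  R x.2 y.2 ∧ 1 ≤ y.2 ∧ y.2 ≤ k ∧ (x.1, y.1) ∈ E y.2

theorem journey_iff_transGen_timedStep {R : ℕ → ℕ → Prop} (hR : ∀ j, 0 < j → R 0 j)
    {E : ℕ → Finset (V × V)} {k : ℕ} {u v : V} :
    Journey R E k u v ↔ ∃ j, TransGen (timedStep R E k) (u, 0) (v, j) := by
  simp only [transGen_iff_exists_fin_chain]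
  constructor
  · rintro ⟨p, w, t, hR', ht, rfl, rfl, hw⟩
    refine ⟨t (Fin.last p), p, fun i => (w i, (Fin.cons 0 t : Fin (p + 2) → ℕ) i), by simp, ?_,
      fun j => ?_⟩
    · simp [← Fin.succ_last]
    · refine ⟨?_, ht j |>.1, ht j |>.2, hw j⟩
      cases j using Fin.cases with
      | zero => exact hR _ (ht 0).1
      | succ i => simpa [← Fin.succ_castSucc] using hR' i
  · rintro ⟨j, p, s, hs0, hsl, hs⟩
    refine ⟨p, fun i => (s i).1, fun i => (s i.succ).2, fun i => ?_,
      fun i => ⟨(hs i).2.1, (hs i).2.2.1⟩, by simp [hs0], by simp [hsl], fun i => (hs i).2.2.2⟩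
    show R (s i.castSucc.succ).2 (s i.succ.succ).2
    rw [Fin.succ_castSucc]
    exact (hs i.succ).1

section Closure

variable {E : ℕ → Finset (V × V)} {k : ℕ}

theorem transGen_timedStep_le_of_transGen {a b : V} {i j : ℕ}
    (hab : TransGen (fun a b => (a, b) ∈ E j) a b) (hij : i ≤ j) (hj : 1 ≤ j) (hjk : j ≤ k) :
    TransGen (timedStep (· ≤ ·) E k) (a, i) (b, j) := by
  induction hab with
  | single hab => exact .single ⟨hij, hj, hjk, hab⟩
  | tail _ hcd ih => exact ih.tail ⟨le_rfl, hj, hjk, hcd⟩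

variable [Fintype V]

theorem transGen_timedStep_lt_staticClosure_snoc {x : V × ℕ} {a b : V} {j : ℕ}
    (h : TransGen (timedStep (· < ·) (staticClosure E) k) x (a, j)) (hab : (a, b) ∈ E j) :
    TransGen (timedStep (· < ·) (staticClosure E) k) x (b, j) := by
  obtain ⟨y, hxy, hij, hj, hjk, hya⟩ := TransGen.tail'_iff.mp h
  exact .tail' hxy ⟨hij, hj, hjk, mem_staticClosure.mpr ((mem_staticClosure.mp hya).tail hab)⟩

theorem transGen_timedStep_le_iff_lt_staticClosure {u : V} {y : V × ℕ} :
    TransGen (timedStep (· ≤ ·) E k) (u, 0) y ↔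
      TransGen (timedStep (· < ·) (staticClosure E) k) (u, 0) y := by
  constructor
  · intro h
    induction h with
    | single hstep =>
      obtain ⟨-, hj, hjk, hub⟩ := hstep
      exact .single ⟨hj, hj, hjk, mem_staticClosure_of_mem hub⟩
    | @tail x y _ hxy ih =>
      obtain ⟨hle, hj, hjk, hab⟩ := hxy
      rcases hle.lt_or_eq with hlt | heq
      · exact ih.tail ⟨hlt, hj, hjk, mem_staticClosure_of_mem hab⟩
      · obtain ⟨a, i⟩ := x
        obtain ⟨b, j⟩ := y
        dsimp only at heq hab
        subst heq
        exact transGen_timedStep_lt_staticClosure_snoc ih hab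
  · intro h
    induction h with
    | single hstep =>
      obtain ⟨hj0, hj, hjk, hub⟩ := hstep
      exact transGen_timedStep_le_of_transGen (mem_staticClosure.mp hub) hj0.le hj hjk
    | tail _ hab ih =>
      obtain ⟨hlt, hj, hjk, hab⟩ := hab
      exact ih.trans (transGen_timedStep_le_of_transGen (mem_staticClosure.mp hab) hlt.le hj hjk)

end Closure

/-- There is a non-strict journey from `u` to `v` in `(E 1, ..., E k)` iff
there is a strict journey from `u` to `v` in `(E_1^*, ..., E_k^*)`.
Consequently, the strict transitive closure of `(E_1^*, ..., E_k^*)` equals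
the non-strict transitive closure of `(E_1, ..., E_k)`. -/
theorem nonStrict_iff_strict_on_closures [Fintype V]
    (k : ℕ) (E : ℕ → Finset (V × V)) :
    (∀ u v : V, NonStrictJourney E k u v ↔ StrictJourney (staticClosure E) k u v) ∧
    {e : V × V | e.1 ≠ e.2 ∧ StrictJourney (staticClosure E) k e.1 e.2} =
      {e : V × V | e.1 ≠ e.2 ∧ NonStrictJourney E k e.1 e.2} := by
  have journeys : ∀ u v : V,
      NonStrictJourney E k u v ↔ StrictJourney (staticClosure E) k u v := fun u v => by
    rw [nonStrictJourney_iff_journey, strictJourney_iff_journey,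
      journey_iff_transGen_timedStep fun _ _ => Nat.zero_le _,
      journey_iff_transGen_timedStep fun _ => id]
    simp only [transGen_timedStep_le_iff_lt_staticClosure]
  exact ⟨journeys, Set.ext fun e => and_congr_right fun _ => (journeys e.1 e.2).symm⟩
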